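/- Let F : ℝ^d → ℝ be differentiable with L-Lipschitz gradient, let ξ be a random vector with i.i.d. Rademacher entries, and μ > 0. Then the one-point perturbation estimator ĝ = ((F(θ + μξ) − F(θ))/μ) ξ satisfies ‖E[ĝ] − ∇F(θ)‖ ≤ (L μ d^{3/2})/2, so the bias vanishes as μ → 0. -/

import Mathlib

/-!
Averaged over the sign cube, `⟪g, ξ⟫ ξ` is exactly `g`: distinct coordinates of `ξ` are
uncorrelated and each squares to `1`. So the bias is the average of `(r ξ / μ) ξ`, where
`r ξ = F (θ + μ ξ) - F θ - μ ⟪∇F θ, ξ⟫` is the first-order Taylor remainder. The Lipschitz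
gradient bounds `|r ξ| ≤ L μ² ‖ξ‖² / 2`, and `‖ξ‖ = √d` turns `L μ ‖ξ‖³ / 2` into
`L μ d^{3/2} / 2`.
-/

/-- The Rademacher sign vector in `ℝ^d` associated to `σ : Fin d → Bool`. -/
def radVec (d : ℕ) (σ : Fin d → Bool) : EuclideanSpace ℝ (Fin d) :=
  WithLp.toLp 2 (fun i => if σ i then 1 else -1)

open RealInnerProductSpace Finset

section Smooth

variable {E : Type*} [NormedAddCommGroup E] [InnerProductSpace ℝ E] [CompleteSpace E]

lemma hasDerivAt_comp_add_smul {F : E → ℝ} (hF : Differentiable ℝ F) (x v : E) (t : ℝ) :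
    HasDerivAt (fun s : ℝ => F (x + s • v)) ⟪gradient F (x + t • v), v⟫ t := by
  have hline : HasDerivAt (fun s : ℝ => x + s • v) v t := by
    simpa using ((hasDerivAt_id t).smul_const v).const_add x
  simpa [Function.comp_def] using
    (hF (x + t • v)).hasGradientAt.hasFDerivAt.comp_hasDerivAt t hline

theorem abs_sub_sub_inner_gradient_le {L : ℝ} {F : E → ℝ} (hF : Differentiable ℝ F)
    (hLip : ∀ x y, ‖gradient F x - gradient F y‖ ≤ L * ‖x - y‖) (x v : E) :
    |F (x + v) - F x - ⟪gradient F x, v⟫| ≤ L / 2 * ‖v‖ ^ 2 := by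
  have hφ (t : ℝ) : HasDerivAt (fun s => F (x + s • v) - F x - s * ⟪gradient F x, v⟫)
      ⟪gradient F (x + t • v) - gradient F x, v⟫ t := by
    rw [inner_sub_left]
    exact ((hasDerivAt_comp_add_smul hF x v t).sub_const (F x)).sub (hasDerivAt_mul_const _)
  have hB (t : ℝ) : HasDerivAt (fun s => L / 2 * ‖v‖ ^ 2 * s ^ 2) (L * ‖v‖ ^ 2 * t) t :=
    ((hasDerivAt_pow 2 t).const_mul _).congr_deriv (by push_cast; ring)
  have bound (t : ℝ) (ht : t ∈ Set.Ico (0 : ℝ) 1) :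
      ‖⟪gradient F (x + t • v) - gradient F x, v⟫‖ ≤ L * ‖v‖ ^ 2 * t := by
    calc ‖⟪gradient F (x + t • v) - gradient F x, v⟫‖
        ≤ ‖gradient F (x + t • v) - gradient F x‖ * ‖v‖ := norm_inner_le_norm _ _
      _ ≤ L * ‖t • v‖ * ‖v‖ := by
          gcongr
          simpa using hLip (x + t • v) x
      _ = L * ‖v‖ ^ 2 * t := by rw [norm_smul, Real.norm_of_nonneg ht.1]; ring
  simpa using image_norm_le_of_norm_deriv_right_le_deriv_boundary
    (fun t _ => (hφ t).continuousAt.continuousWithinAt) (fun t _ => (hφ t).hasDerivWithinAt)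
    (by simp) hB bound (Set.right_mem_Icc.2 zero_le_one)

theorem abs_slope_sub_inner_gradient_le {L : ℝ} {F : E → ℝ} (hF : Differentiable ℝ F)
    (hLip : ∀ x y, ‖gradient F x - gradient F y‖ ≤ L * ‖x - y‖) (x v : E) {μ : ℝ} (hμ : 0 < μ) :
    |(F (x + μ • v) - F x) / μ - ⟪gradient F x, v⟫| ≤ L / 2 * μ * ‖v‖ ^ 2 := by
  have h := abs_sub_sub_inner_gradient_le hF hLip x (μ • v)
  rw [inner_smul_right, norm_smul, Real.norm_of_nonneg hμ.le] at h
  rw [← mul_le_mul_iff_of_pos_left hμ, ← abs_of_pos hμ, ← abs_mul, abs_of_pos hμ]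
  calc |μ * ((F (x + μ • v) - F x) / μ - ⟪gradient F x, v⟫)|
      = |F (x + μ • v) - F x - μ * ⟪gradient F x, v⟫| := by field_simp
    _ ≤ L / 2 * (μ * ‖v‖) ^ 2 := h
    _ = μ * (L / 2 * μ * ‖v‖ ^ 2) := by ring

end Smooth

lemma radVec_apply (d : ℕ) (σ : Fin d → Bool) (i : Fin d) :
    radVec d σ i = if σ i then 1 else -1 := rfl

lemma radVec_apply_mul_self (d : ℕ) (σ : Fin d → Bool) (i : Fin d) :
    radVec d σ i * radVec d σ i = 1 := by
  by_cases h : σ i <;> simp [radVec_apply, h]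

lemma norm_radVec (d : ℕ) (σ : Fin d → Bool) : ‖radVec d σ‖ = √d := by
  simp [EuclideanSpace.norm_eq, sq, radVec_apply_mul_self]

lemma norm_radVec_pow_three (d : ℕ) (σ : Fin d → Bool) :
    ‖radVec d σ‖ ^ 3 = (d : ℝ) ^ ((3 : ℝ) / 2) := by
  rw [norm_radVec, Real.sqrt_eq_rpow, ← Real.rpow_natCast, ← Real.rpow_mul d.cast_nonneg]
  norm_num

lemma sum_radVec_apply_mul_apply (d : ℕ) (i j : Fin d) :
    ∑ σ : Fin d → Bool, radVec d σ i * radVec d σ j = if i = j then 2 ^ d else 0 := by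
  split_ifs with hij
  · simp [hij, radVec_apply_mul_self]
  -- flipping the `j`-th sign is a bijection of the cube that negates every summand
  have hflip : Function.Involutive fun σ : Fin d → Bool => Function.update σ j (!σ j) := by
    intro σ
    simp
  have hneg (σ : Fin d → Bool) :
      radVec d (hflip.toPerm _ σ) i * radVec d (hflip.toPerm _ σ) j =
        -(radVec d σ i * radVec d σ j) := by
    by_cases h : σ j <;> simp [radVec_apply, Function.update_of_ne hij, h]
  have := Equiv.sum_comp (hflip.toPerm _) fun σ => radVec d σ i * radVec d σ j
  simp only [hneg, sum_neg_distrib] at this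
  linarith

lemma sum_inner_smul_radVec (d : ℕ) (g : EuclideanSpace ℝ (Fin d)) :
    ∑ σ : Fin d → Bool, ⟪g, radVec d σ⟫ • radVec d σ = (2 ^ d : ℝ) • g := by
  ext i
  simp only [WithLp.ofLp_sum, WithLp.ofLp_smul, Finset.sum_apply, Pi.smul_apply, smul_eq_mul]
  calc ∑ σ : Fin d → Bool, ⟪g, radVec d σ⟫ * radVec d σ i
      = ∑ j, g j * ∑ σ : Fin d → Bool, radVec d σ j * radVec d σ i := by
        simp_rw [mul_sum, PiLp.inner_apply, sum_mul]
        rw [sum_comm]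
        exact sum_congr rfl fun j _ => sum_congr rfl fun σ _ => by
          simp only [RCLike.inner_apply, conj_trivial]; ring
    _ = 2 ^ d * g i := by simp [sum_radVec_apply_mul_apply, mul_comm]

theorem stmt_2_general (d : ℕ) (L : ℝ)
    (F : EuclideanSpace ℝ (Fin d) → ℝ) (hF : Differentiable ℝ F)
    (hLip : ∀ x y : EuclideanSpace ℝ (Fin d),
      ‖gradient F x - gradient F y‖ ≤ L * ‖x - y‖)
    (θ : EuclideanSpace ℝ (Fin d)) (μ : ℝ) (hμ : 0 < μ) :
    ‖((2 : ℝ) ^ d)⁻¹ • (∑ σ : Fin d → Bool,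
        ((F (θ + μ • radVec d σ) - F θ) / μ) • radVec d σ)
      - gradient F θ‖ ≤ L * μ * (d : ℝ) ^ ((3 : ℝ) / 2) / 2 := by
  set g := gradient F θ
  have hterm (σ : Fin d → Bool) :
      ‖((F (θ + μ • radVec d σ) - F θ) / μ - ⟪g, radVec d σ⟫) • radVec d σ‖ ≤
        L * μ * (d : ℝ) ^ ((3 : ℝ) / 2) / 2 := by
    rw [norm_smul, Real.norm_eq_abs, ← norm_radVec_pow_three d σ]
    calc _ ≤ L / 2 * μ * ‖radVec d σ‖ ^ 2 * ‖radVec d σ‖ := by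
          gcongr
          exact abs_slope_sub_inner_gradient_le hF hLip θ _ hμ
      _ = _ := by ring
  calc _ = ‖((2 : ℝ) ^ d)⁻¹ • ∑ σ : Fin d → Bool,
        ((F (θ + μ • radVec d σ) - F θ) / μ - ⟪g, radVec d σ⟫) • radVec d σ‖ := by
        simp_rw [sub_smul, sum_sub_distrib, sum_inner_smul_radVec, smul_sub,
          inv_smul_smul₀ (by positivity : (2 : ℝ) ^ d ≠ 0)]
    _ ≤ ((2 : ℝ) ^ d)⁻¹ * ∑ _σ : Fin d → Bool, L * μ * (d : ℝ) ^ ((3 : ℝ) / 2) / 2 := by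
        rw [norm_smul, Real.norm_of_nonneg (by positivity)]
        gcongr
        exact (norm_sum_le _ _).trans (sum_le_sum fun σ _ => hterm σ)
    _ = _ := by
        rw [sum_const, card_univ, Fintype.card_fun, Fintype.card_bool, Fintype.card_fin,
          nsmul_eq_mul, Nat.cast_pow, Nat.cast_two, inv_mul_cancel_left₀ (by positivity)]

/-- Bias bound for the one-point Rademacher perturbation estimator: if `F` is differentiable
with `L`-Lipschitz gradient, `ξ` is a uniform Rademacher vector and `μ > 0`, then
`‖E[((F(θ+μξ)-F(θ))/μ)ξ] - ∇F(θ)‖ ≤ L μ d^{3/2} / 2`. -/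
theorem stmt_2 (d : ℕ) (L : ℝ) (hL : 0 ≤ L)
    (F : EuclideanSpace ℝ (Fin d) → ℝ) (hF : Differentiable ℝ F)
    (hLip : ∀ x y : EuclideanSpace ℝ (Fin d),
      ‖gradient F x - gradient F y‖ ≤ L * ‖x - y‖)
    (θ : EuclideanSpace ℝ (Fin d)) (μ : ℝ) (hμ : 0 < μ) :
    ‖((2 : ℝ) ^ d)⁻¹ • (∑ σ : Fin d → Bool,
        ((F (θ + μ • radVec d σ) - F θ) / μ) • radVec d σ)
      - gradient F θ‖ ≤ L * μ * (d : ℝ) ^ ((3 : ℝ) / 2) / 2 :=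
  stmt_2_general d L F hF hLip θ μ hμ
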